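/- (Head occurrences are typed) If a term of the form H[t], obtained by plugging t into a head context H, is typable in system P, then t is typable in system P. -/

import Mathlib

/-! # The pair pattern calculus Λ_p and the type system P -/

/-- Patterns: p ::= x | ⟨p,q⟩ -/
inductive Pat : Type
  | var : ℕ → Pat
  | pair : Pat → Pat → Pat
  deriving DecidableEq

/-- Free variables of a pattern. -/
def Pat.fv : Pat → Finset ℕ
  | .var x => {x}
  | .pair p q => p.fv ∪ q.fv

/-- Linearity: every variable occurs at most once in the pattern. -/
def Pat.Linear : Pat → Prop
  | .var _ => True
  | .pair p q => p.Linear ∧ q.Linear ∧ Disjoint p.fv q.fv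

/-- Terms: t ::= x | λp.t | ⟨t,u⟩ | t u | t[p/u] | fail -/
inductive Tm : Type
  | var : ℕ → Tm
  | lam : Pat → Tm → Tm
  | pair : Tm → Tm → Tm
  | app : Tm → Tm → Tm
  | esub : Tm → Pat → Tm → Tm   -- explicit matching t[p/u]
  | fail : Tm
  deriving DecidableEq

/-- Free variables of a term. -/
def Tm.fv : Tm → Finset ℕ
  | .var x => {x}
  | .lam p t => t.fv \ p.fv
  | .pair t u => t.fv ∪ u.fv
  | .app t u => t.fv ∪ u.fv
  | .esub t p u => (t.fv \ p.fv) ∪ u.fv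
  | .fail => ∅

/-- Substitution of u for the free occurrences of x. -/
def Tm.subst (x : ℕ) (u : Tm) : Tm → Tm
  | .var y => if y = x then u else .var y
  | .lam p t => if x ∈ p.fv then .lam p t else .lam p (Tm.subst x u t)
  | .pair a b => .pair (Tm.subst x u a) (Tm.subst x u b)
  | .app a b => .app (Tm.subst x u a) (Tm.subst x u b)
  | .esub t p v => .esub (if x ∈ p.fv then t else Tm.subst x u t) p (Tm.subst x u v)
  | .fail => .fail

/-- List contexts L ::= □ | L[p/t], represented as lists of explicit matchings
(head = outermost). -/
abbrev LCtx : Type := List (Pat × Tm)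

/-- Plugging a term in a list context. -/
def LCtx.plug : LCtx → Tm → Tm
  | [], t => t
  | (p, u) :: L, t => .esub (LCtx.plug L t) p u

/-- Root reduction rules (r₁)–(r₉). -/
inductive Root : Tm → Tm → Prop
  | r1 (L : LCtx) (p t u) : Root (.app (L.plug (.lam p t)) u) (L.plug (.esub t p u))
  | r2 (t x u) : Root (.esub t (.var x) u) (Tm.subst x u t)
  | r3 (t p₁ p₂ L u₁ u₂) :
      Root (.esub t (.pair p₁ p₂) (LCtx.plug L (.pair u₁ u₂)))
           (LCtx.plug L (.esub (.esub t p₁ u₁) p₂ u₂))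
  | r4 (t p₁ p₂ L q u) : Root (.esub t (.pair p₁ p₂) (LCtx.plug L (.lam q u))) .fail
  | r5 (L : LCtx) (t u v) : Root (.app (L.plug (.pair t u)) v) .fail
  | r6 (t p₁ p₂) : Root (.esub t (.pair p₁ p₂) .fail) .fail
  | r7 (L : LCtx) : L ≠ [] → Root (L.plug .fail) .fail
  | r8 (t) : Root (.app .fail t) .fail
  | r9 (p) : Root (.lam p .fail) .fail

/-- The reduction relation: contextual closure of the root rules. -/
inductive Step : Tm → Tm → Prop
  | root {t t'} : Root t t' → Step t t'
  | lam {t t'} (p) : Step t t' → Step (.lam p t) (.lam p t')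
  | pairL {t t'} (u) : Step t t' → Step (.pair t u) (.pair t' u)
  | pairR {u u'} (t) : Step u u' → Step (.pair t u) (.pair t u')
  | appL {t t'} (u) : Step t t' → Step (.app t u) (.app t' u)
  | appR {u u'} (t) : Step u u' → Step (.app t u) (.app t u')
  | subL {t t'} (p u) : Step t t' → Step (.esub t p u) (.esub t' p u)
  | subR {u u'} (t p) : Step u u' → Step (.esub t p u) (.esub t p u')

/-- Root rules without the substitution rule (r₂). -/
inductive RootA0 : Tm → Tm → Prop
  | r1 (L : LCtx) (p t u) : RootA0 (.app (L.plug (.lam p t)) u) (L.plug (.esub t p u))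
  | r3 (t p₁ p₂ L u₁ u₂) :
      RootA0 (.esub t (.pair p₁ p₂) (LCtx.plug L (.pair u₁ u₂)))
             (LCtx.plug L (.esub (.esub t p₁ u₁) p₂ u₂))
  | r4 (t p₁ p₂ L q u) : RootA0 (.esub t (.pair p₁ p₂) (LCtx.plug L (.lam q u))) .fail
  | r5 (L : LCtx) (t u v) : RootA0 (.app (L.plug (.pair t u)) v) .fail
  | r6 (t p₁ p₂) : RootA0 (.esub t (.pair p₁ p₂) .fail) .fail
  | r7 (L : LCtx) : L ≠ [] → RootA0 (L.plug .fail) .fail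
  | r8 (t) : RootA0 (.app .fail t) .fail
  | r9 (p) : RootA0 (.lam p .fail) .fail

/-- Reduction without rule (r₂). -/
inductive StepA0 : Tm → Tm → Prop
  | root {t t'} : RootA0 t t' → StepA0 t t'
  | lam {t t'} (p) : StepA0 t t' → StepA0 (.lam p t) (.lam p t')
  | pairL {t t'} (u) : StepA0 t t' → StepA0 (.pair t u) (.pair t' u)
  | pairR {u u'} (t) : StepA0 u u' → StepA0 (.pair t u) (.pair t u')
  | appL {t t'} (u) : StepA0 t t' → StepA0 (.app t u) (.app t' u)
  | appR {u u'} (t) : StepA0 u u' → StepA0 (.app t u) (.app t u')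
  | subL {t t'} (p u) : StepA0 t t' → StepA0 (.esub t p u) (.esub t' p u)
  | subR {u u'} (t p) : StepA0 u u' → StepA0 (.esub t p u) (.esub t p u')

/-- Many-step reduction. -/
abbrev Steps : Tm → Tm → Prop := Relation.ReflTransGen Step

/-! ## Types and the type system P -/

/-- Types σ ::= α | ⟨A,B⟩ | A → σ, where multiset types A are represented
as lists of types. -/
inductive Ty : Type
  | base : ℕ → Ty
  | prod : List Ty → List Ty → Ty
  | arr : List Ty → Ty → Ty

/-- Typing environments: functions from variables to multiset types. -/
def Env : Type := ℕ → List Ty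

/-- Sum of environments (pointwise multiset union). -/
def Env.add (Γ Δ : Env) : Env := fun x => Γ x ++ Δ x

/-- Empty environment. -/
def Env.empty : Env := fun _ => []

/-- The environment x : A. -/
def Env.single (x : ℕ) (A : List Ty) : Env := fun y => if y = x then A else []

/-- Γ|_p : restriction of Γ to the free variables of p. -/
def Env.restrict (Γ : Env) (p : Pat) : Env := fun x => if x ∈ p.fv then Γ x else []

/-- Γ \ Γ|_p. -/
def Env.erase (Γ : Env) (p : Pat) : Env := fun x => if x ∈ p.fv then [] else Γ x

/-- Pattern typing Γ ⊩ p : A. -/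
inductive PatTy : Env → Pat → List Ty → Prop
  | var (x : ℕ) (A : List Ty) : PatTy (Env.single x A) (.var x) A
  | pair {Γ Δ p q A B} : PatTy Γ p A → PatTy Δ q B → Disjoint p.fv q.fv →
      PatTy (Γ.add Δ) (.pair p q) [Ty.prod A B]

mutual
  /-- Typing derivations Γ ⊢ t : σ of system P (rules ax, abs, app, pair, sub). -/
  inductive TDeriv : Env → Tm → Ty → Type
    | ax (x : ℕ) (σ : Ty) : TDeriv (Env.single x [σ]) (.var x) σ
    | abs {Γ t σ p A} : TDeriv Γ t σ → PatTy (Γ.restrict p) p A →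
        TDeriv (Γ.erase p) (.lam p t) (.arr A σ)
    | app {Γ Δ t u A σ} : TDeriv Γ t (.arr A σ) → MDeriv Δ u A →
        TDeriv (Γ.add Δ) (.app t u) σ
    | pair {Γ Δ t u A B} : MDeriv Γ t A → MDeriv Δ u B →
        TDeriv (Γ.add Δ) (.pair t u) (.prod A B)
    | esub {Γ Δ t σ p A u} : TDeriv Γ t σ → PatTy (Γ.restrict p) p A → MDeriv Δ u A →
        TDeriv ((Γ.erase p).add Δ) (.esub t p u) σ
  /-- Multiset typing derivations Γ ⊢ t : A (the rule (many)). -/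
  inductive MDeriv : Env → Tm → List Ty → Type
    | nil (t : Tm) : MDeriv Env.empty t []
    | cons {Γ Δ t σ A} : TDeriv Γ t σ → MDeriv Δ t A → MDeriv (Γ.add Δ) t (σ :: A)
end

mutual
  /-- The measure of a derivation: number of typing rules except (many). -/
  def measT : ∀ {Γ t σ}, TDeriv Γ t σ → ℕ
    | _, _, _, .ax _ _ => 1
    | _, _, _, .abs d _ => measT d + 1
    | _, _, _, .app d m => measT d + measM m + 1
    | _, _, _, .pair m n => measM m + measM n + 1
    | _, _, _, .esub d _ m => measT d + measM m + 1
  def measM : ∀ {Γ t A}, MDeriv Γ t A → ℕ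
    | _, _, _, .nil _ => 0
    | _, _, _, .cons d m => measT d + measM m
end

/-- Term contexts with a single hole. -/
inductive TmCtx : Type
  | hole : TmCtx
  | lam : Pat → TmCtx → TmCtx
  | pairL : TmCtx → Tm → TmCtx
  | pairR : Tm → TmCtx → TmCtx
  | appL : TmCtx → Tm → TmCtx
  | appR : Tm → TmCtx → TmCtx
  | subL : TmCtx → Pat → Tm → TmCtx
  | subR : Tm → Pat → TmCtx → TmCtx

/-- Plugging a term in a term context. -/
def TmCtx.plug : TmCtx → Tm → Tm
  | .hole, t => t
  | .lam p C, t => .lam p (C.plug t)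
  | .pairL C u, t => .pair (C.plug t) u
  | .pairR u C, t => .pair u (C.plug t)
  | .appL C u, t => .app (C.plug t) u
  | .appR u C, t => .app u (C.plug t)
  | .subL C p u, t => .esub (C.plug t) p u
  | .subR u p C, t => .esub u p (C.plug t)

mutual
  /-- Typed occurrences of a derivation. -/
  def tocT : ∀ {Γ t σ}, TDeriv Γ t σ → Set TmCtx
    | _, _, _, .ax _ _ => {TmCtx.hole}
    | _, _, _, @TDeriv.abs _ _ _ p _ d _ =>
        {TmCtx.hole} ∪ (TmCtx.lam p) '' tocT d
    | _, _, _, @TDeriv.app _ _ t u _ _ d m =>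
        {TmCtx.hole} ∪ (fun C => TmCtx.appL C u) '' tocT d ∪ (fun C => TmCtx.appR t C) '' tocM m
    | _, _, _, @TDeriv.pair _ _ t u _ _ m n =>
        {TmCtx.hole} ∪ (fun C => TmCtx.pairL C u) '' tocM m ∪ (fun C => TmCtx.pairR t C) '' tocM n
    | _, _, _, @TDeriv.esub _ _ t _ p _ u d _ m =>
        {TmCtx.hole} ∪ (fun C => TmCtx.subL C p u) '' tocT d ∪ (fun C => TmCtx.subR t p C) '' tocM m
  def tocM : ∀ {Γ t A}, MDeriv Γ t A → Set TmCtx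
    | _, _, _, .nil _ => ∅
    | _, _, _, .cons d m => tocT d ∪ tocM m
end

/-- Head contexts H ::= □ | λp.H | H t | H[p/t]. -/
inductive HCtx : Type
  | hole : HCtx
  | lam : Pat → HCtx → HCtx
  | app : HCtx → Tm → HCtx
  | esub : HCtx → Pat → Tm → HCtx

/-- Plugging a term in a head context. -/
def HCtx.plug : HCtx → Tm → Tm
  | .hole, t => t
  | .lam p H, t => .lam p (H.plug t)
  | .app H u, t => .app (H.plug t) u
  | .esub H p u, t => .esub (H.plug t) p u

mutual
  /-- K-canonical forms: K ::= x | K t | K[⟨p,q⟩/K]. -/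
  inductive IsK : Tm → Prop
    | var (x : ℕ) : IsK (.var x)
    | app {t} (u) : IsK t → IsK (.app t u)
    | esub {t u} (p q) : IsK t → IsK u → IsK (.esub t (.pair p q) u)
  /-- Canonical forms: J ::= λp.J | ⟨t,t⟩ | K | J[⟨p,q⟩/K]. -/
  inductive IsJ : Tm → Prop
    | lam {t} (p) : IsJ t → IsJ (.lam p t)
    | pair (t u : Tm) : IsJ (.pair t u)
    | ofK {t} : IsK t → IsJ t
    | esub {t u} (p q) : IsJ t → IsK u → IsJ (.esub t (.pair p q) u)
end

/-- Pure K-canonical forms: K′ ::= x | K′ t. -/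
inductive IsK' : Tm → Prop
  | var (x : ℕ) : IsK' (.var x)
  | app {t} (u) : IsK' t → IsK' (.app t u)

/-- Pure canonical forms: J′ ::= λp.J′ | ⟨t,t⟩ | K′ | J′[⟨p,q⟩/K′]. -/
inductive IsJ' : Tm → Prop
  | lam {t} (p) : IsJ' t → IsJ' (.lam p t)
  | pair (t u : Tm) : IsJ' (.pair t u)
  | ofK {t} : IsK' t → IsJ' t
  | esub {t u} (p q) : IsJ' t → IsK' u → IsJ' (.esub t (.pair p q) u)

/-- A multiset type is inhabited if some closed term has it. -/
def MInhab (A : List Ty) : Prop := ∃ u : Tm, u.fv = ∅ ∧ Nonempty (MDeriv Env.empty u A)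

/-- An environment is inhabited if all the multiset types it assigns are inhabited. -/
def EnvInhab (Γ : Env) : Prop := ∀ x, Γ x ≠ [] → MInhab (Γ x)

/-- C₁ → ⋯ → Cₙ → σ. -/
def mkArr : List (List Ty) → Ty → Ty
  | [], σ => σ
  | A :: Cs, σ => .arr A (mkArr Cs σ)

/-- A term is solvable if some head context closes it and sends it to a pair. -/
def Solvable (t : Tm) : Prop :=
  ∃ H : HCtx, (H.plug t).fv = ∅ ∧ ∃ u v : Tm, Steps (H.plug t) (.pair u v)

def Tm.Typable (t : Tm) : Prop := ∃ (Γ : Env) (σ : Ty), Nonempty (TDeriv Γ t σ)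

namespace Tm.Typable

variable {p : Pat} {t u : Tm}

theorem of_lam : (Tm.lam p t).Typable → t.Typable
  | ⟨_, _, ⟨.abs d _⟩⟩ => ⟨_, _, ⟨d⟩⟩

theorem of_app_left : (Tm.app t u).Typable → t.Typable
  | ⟨_, _, ⟨.app d _⟩⟩ => ⟨_, _, ⟨d⟩⟩

theorem of_esub_left : (Tm.esub t p u).Typable → t.Typable
  | ⟨_, _, ⟨.esub d _ _⟩⟩ => ⟨_, _, ⟨d⟩⟩

end Tm.Typable

/- The hole of a head context is never an argument or a matched term, so it is typed by a
`TDeriv` premise rather than by an `MDeriv`, which could be the empty `MDeriv.nil`. -/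
theorem HCtx.typable_of_typable_plug {t : Tm} : ∀ H : HCtx, (H.plug t).Typable → t.Typable
  | .hole, h => h
  | .lam _ H, h => H.typable_of_typable_plug h.of_lam
  | .app H _, h => H.typable_of_typable_plug h.of_app_left
  | .esub H _ _, h => H.typable_of_typable_plug h.of_esub_left

/-- Head occurrences are typed: if H[t] is typable for a head
context H, then t is typable. -/
theorem head_plug_typable {t : Tm} (H : HCtx)
    (h : ∃ (Γ : Env) (σ : Ty), Nonempty (TDeriv Γ (H.plug t) σ)) :
    ∃ (Γ' : Env) (σ' : Ty), Nonempty (TDeriv Γ' t σ') :=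
  H.typable_of_typable_plug h
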